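/- arXiv:2601.09034 — 2 statements merged into one kernel-verified Lean document; each statement's English description precedes it below -/
import Mathlib

section
/- Let P be a partially ordered set equipped with a commutative flow T and let F : P → Set be a functor. For every q ∈ P the merging distance d_q^F is an extended pseudo-ultrametric on F(q): for all a, b, c ∈ F(q) one has d_q^F(a,a) = 0, d_q^F(a,b) = d_q^F(b,a), and d_q^F(a,c) ≤ max{ d_q^F(a,b), d_q^F(b,c) }. -/
open scoped NNReal ENNReal

universe u v

/-- A commutative flow on a partially ordered set `P`. -/
structure CFlow (P : Type u) [PartialOrder P] where
  T : ℝ≥0 → P → P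
  mono : ∀ ε : ℝ≥0, Monotone (T ε)
  T_zero : ∀ p : P, T 0 p = p
  T_add : ∀ (ε δ : ℝ≥0) (p : P), T (ε + δ) p = T ε (T δ p)
  le_T : ∀ (ε : ℝ≥0) (p : P), p ≤ T ε p
  T_le_T : ∀ {ε δ : ℝ≥0} (p : P), ε ≤ δ → T ε p ≤ T δ p

/-- A functor `P → Set` for a poset `P`. -/
structure PosetFunctor (P : Type u) [PartialOrder P] where
  obj : P → Type v
  map : ∀ {p q : P}, p ≤ q → obj p → obj q
  map_id : ∀ (p : P) (a : obj p), map (le_refl p) a = a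
  map_comp : ∀ {p q r : P} (h₁ : p ≤ q) (h₂ : q ≤ r) (a : obj p),
      map h₂ (map h₁ a) = map (h₁.trans h₂) a

/-- The merging distance `d_q^F(a,b)`, valued in `[0,∞]`. -/
noncomputable def mergeDist {P : Type u} [PartialOrder P] (T : CFlow P)
    (F : PosetFunctor P) (q : P) (a b : F.obj q) : ℝ≥0∞ :=
  sInf {x : ℝ≥0∞ | ∃ ε : ℝ≥0, x = (ε : ℝ≥0∞) ∧
    F.map (T.le_T ε q) a = F.map (T.le_T ε q) b}

/-- The set `D_q^F` of reducing constants of `q` on `F`. -/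
def reducingSet {P : Type u} [PartialOrder P] (T : CFlow P)
    (F : PosetFunctor P) (q : P) : Set ℝ≥0 :=
  {δ | ∀ (γ₁ γ₂ : ℝ≥0) (h₁ : γ₁ < δ) (h₂ : δ ≤ γ₂),
    ¬ Function.Injective (F.map (T.T_le_T q (h₁.le.trans h₂)))}

/-- The left parallelogram loss `L_parL^{p,q}(φ)`. -/
noncomputable def LparL {P : Type u} [PartialOrder P] (T : CFlow P)
    (F G : PosetFunctor P) (η : ℝ≥0)
    (φ : ∀ p : P, F.obj p → G.obj (T.T η p)) {p q : P} (hpq : p ≤ q) : ℝ≥0∞ :=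
  ⨆ a : F.obj p, mergeDist T G (T.T η q)
    (φ q (F.map hpq a)) (G.map (T.mono η hpq) (φ p a))

/-- The right parallelogram loss `L_parR^{p,q}(ψ)`. -/
noncomputable def LparR {P : Type u} [PartialOrder P] (T : CFlow P)
    (F G : PosetFunctor P) (η : ℝ≥0)
    (ψ : ∀ p : P, G.obj p → F.obj (T.T η p)) {p q : P} (hpq : p ≤ q) : ℝ≥0∞ :=
  ⨆ b : G.obj p, mergeDist T F (T.T η q)
    (ψ q (G.map hpq b)) (F.map (T.mono η hpq) (ψ p b))

/-- The lower triangle loss `L_down^p(φ,ψ)`. -/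
noncomputable def Ldown {P : Type u} [PartialOrder P] (T : CFlow P)
    (F G : PosetFunctor P) (η : ℝ≥0)
    (φ : ∀ p : P, F.obj p → G.obj (T.T η p))
    (ψ : ∀ p : P, G.obj p → F.obj (T.T η p)) (p : P) : ℝ≥0∞ :=
  ⨆ a : F.obj p, mergeDist T F (T.T η (T.T η p))
    (ψ (T.T η p) (φ p a))
    (F.map ((T.le_T η p).trans (T.le_T η (T.T η p))) a)

/-- The upper triangle loss `L_up^p(φ,ψ)`. -/
noncomputable def Lup {P : Type u} [PartialOrder P] (T : CFlow P)
    (F G : PosetFunctor P) (η : ℝ≥0)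
    (φ : ∀ p : P, F.obj p → G.obj (T.T η p))
    (ψ : ∀ p : P, G.obj p → F.obj (T.T η p)) (p : P) : ℝ≥0∞ :=
  ⨆ b : G.obj p, mergeDist T G (T.T η (T.T η p))
    (φ (T.T η p) (ψ p b))
    (G.map ((T.le_T η p).trans (T.le_T η (T.T η p))) b)


/-! Elements merged at time `ε` stay merged at every later time, by functoriality along
`T ε q ≤ T δ q`; so merging times `ε` for `(a, b)` and `δ` for `(b, c)` give the merging time
`max ε δ` for `(a, c)`. -/

section MergeDist

variable {P : Type u} [PartialOrder P] (T : CFlow P) (F : PosetFunctor P) (q : P)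

theorem PosetFunctor.map_le_T_eq_of_le {a b : F.obj q} {ε δ : ℝ≥0} (hεδ : ε ≤ δ)
    (h : F.map (T.le_T ε q) a = F.map (T.le_T ε q) b) :
    F.map (T.le_T δ q) a = F.map (T.le_T δ q) b := by
  rw [← F.map_comp (T.le_T ε q) (T.T_le_T q hεδ) a,
    ← F.map_comp (T.le_T ε q) (T.T_le_T q hεδ) b, h]

variable {T F q}

theorem mergeDist_le_of_map_eq {a b : F.obj q} (ε : ℝ≥0)
    (h : F.map (T.le_T ε q) a = F.map (T.le_T ε q) b) : mergeDist T F q a b ≤ ε :=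
  sInf_le ⟨ε, rfl, h⟩

theorem exists_map_eq_of_mergeDist_lt {a b : F.obj q} {r : ℝ≥0∞}
    (h : mergeDist T F q a b < r) :
    ∃ ε : ℝ≥0, (ε : ℝ≥0∞) < r ∧ F.map (T.le_T ε q) a = F.map (T.le_T ε q) b := by
  obtain ⟨_, ⟨ε, rfl, hε⟩, hεr⟩ := sInf_lt_iff.mp h
  exact ⟨ε, hεr, hε⟩

theorem mergeDist_self (a : F.obj q) : mergeDist T F q a a = 0 := by
  simpa using mergeDist_le_of_map_eq (T := T) 0 rfl

theorem mergeDist_comm (a b : F.obj q) : mergeDist T F q a b = mergeDist T F q b a := by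
  simp only [mergeDist, eq_comm (a := F.map _ a)]

theorem mergeDist_le_max (a b c : F.obj q) :
    mergeDist T F q a c ≤ max (mergeDist T F q a b) (mergeDist T F q b c) := by
  by_contra! hlt
  obtain ⟨ε, hε, hab⟩ := exists_map_eq_of_mergeDist_lt ((le_max_left _ _).trans_lt hlt)
  obtain ⟨δ, hδ, hbc⟩ := exists_map_eq_of_mergeDist_lt ((le_max_right _ _).trans_lt hlt)
  have hac : F.map (T.le_T (max ε δ) q) a = F.map (T.le_T (max ε δ) q) c :=
    (F.map_le_T_eq_of_le T q (le_max_left ε δ) hab).trans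
      (F.map_le_T_eq_of_le T q (le_max_right ε δ) hbc)
  have := (mergeDist_le_of_map_eq _ hac).trans_lt (max_lt hε hδ)
  exact lt_irrefl _ (by simpa only [ENNReal.coe_max] using this)

end MergeDist

/-- For every `q ∈ P`, the merging distance `d_q^F` is an extended pseudo-ultrametric
on `F(q)`: it is reflexive, symmetric, and satisfies the strong triangle inequality. -/
theorem mergeDist_pseudo_ultrametric {P : Type u} [PartialOrder P]
    (T : CFlow P) (F : PosetFunctor P) (q : P) (a b c : F.obj q) :
    mergeDist T F q a a = 0 ∧
    mergeDist T F q a b = mergeDist T F q b a ∧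
    mergeDist T F q a c ≤ max (mergeDist T F q a b) (mergeDist T F q b c) :=
  ⟨mergeDist_self a, mergeDist_comm a b, mergeDist_le_max a b c⟩
end

section
/- Let P be a partially ordered set with a commutative flow T, let F, G : P → Set be functors, fix η ∈ [0,∞), and let (φ, ψ) be a T_η-assignment between F and G. For all p < r < q in P, L_parL^{p,q}(φ) ≤ max{ L_parL^{p,r}(φ), L_parL^{r,q}(φ) }. -/
open scoped NNReal ENNReal

universe u v

lemma merge_up {P : Type u} [PartialOrder P] (T : CFlow P) (F : PosetFunctor P)
    (q : P) (a b : F.obj q) {ε δ : ℝ≥0} (h : ε ≤ δ)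
    (he : F.map (T.le_T ε q) a = F.map (T.le_T ε q) b) :
    F.map (T.le_T δ q) a = F.map (T.le_T δ q) b := by
  have h2 : T.T ε q ≤ T.T δ q := T.T_le_T q h
  rw [← F.map_comp (T.le_T ε q) h2 a, ← F.map_comp (T.le_T ε q) h2 b, he]

lemma mergeDist_ultra {P : Type u} [PartialOrder P] (T : CFlow P)
    (F : PosetFunctor P) (q : P) (a b c : F.obj q) :
    mergeDist T F q a c ≤ max (mergeDist T F q a b) (mergeDist T F q b c) := by
  refine le_of_forall_gt_imp_ge_of_dense fun y hy => ?_
  have h1 : mergeDist T F q a b < y := lt_of_le_of_lt (le_max_left _ _) hy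
  have h2 : mergeDist T F q b c < y := lt_of_le_of_lt (le_max_right _ _) hy
  rw [mergeDist, sInf_lt_iff] at h1 h2
  obtain ⟨-, ⟨ε₁, rfl, he₁⟩, hε₁⟩ := h1
  obtain ⟨-, ⟨ε₂, rfl, he₂⟩, hε₂⟩ := h2
  have hm : F.map (T.le_T (max ε₁ ε₂) q) a = F.map (T.le_T (max ε₁ ε₂) q) c :=
    (merge_up T F q a b (le_max_left _ _) he₁).trans
      (merge_up T F q b c (le_max_right _ _) he₂)
  refine le_trans (sInf_le ⟨max ε₁ ε₂, rfl, hm⟩) ?_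
  exact le_of_lt (by rw [ENNReal.coe_max]; exact max_lt hε₁ hε₂)

lemma mergeDist_map_le {P : Type u} [PartialOrder P] (T : CFlow P)
    (F : PosetFunctor P) {q q' : P} (h : q ≤ q') (a b : F.obj q) :
    mergeDist T F q' (F.map h a) (F.map h b) ≤ mergeDist T F q a b := by
  refine sInf_le_sInf ?_
  rintro x ⟨ε, rfl, he⟩
  refine ⟨ε, rfl, ?_⟩
  have h2 : T.T ε q ≤ T.T ε q' := T.mono ε h
  rw [F.map_comp h (T.le_T ε q') a, F.map_comp h (T.le_T ε q') b,
    ← F.map_comp (T.le_T ε q) h2 a, ← F.map_comp (T.le_T ε q) h2 b, he]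

/-- Ultrametric-type inequality for the left parallelogram loss: for `p < r < q`,
`L_parL^{p,q}(φ) ≤ max { L_parL^{p,r}(φ), L_parL^{r,q}(φ) }`. -/
theorem LparL_le_max {P : Type u} [PartialOrder P]
    (T : CFlow P) (F G : PosetFunctor P) (η : ℝ≥0)
    (φ : ∀ p : P, F.obj p → G.obj (T.T η p))
    (ψ : ∀ p : P, G.obj p → F.obj (T.T η p))
    (p r q : P) (hpr : p < r) (hrq : r < q) :
    LparL T F G η φ (hpr.le.trans hrq.le) ≤
      max (LparL T F G η φ hpr.le) (LparL T F G η φ hrq.le) := by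
  refine iSup_le fun a => ?_
  set b := F.map hpr.le a with hb
  set y := G.map (T.mono η hrq.le) (φ r b) with hy
  refine le_trans (mergeDist_ultra T G (T.T η q) _ y _) ?_
  rw [max_comm (LparL T F G η φ hpr.le)]
  refine max_le_max ?_ ?_
  · have h1 : φ q (F.map (hpr.le.trans hrq.le) a) = φ q (F.map hrq.le b) := by
      rw [hb, F.map_comp]
    rw [h1, hy]
    exact le_iSup (fun b => mergeDist T G (T.T η q)
      (φ q (F.map hrq.le b)) (G.map (T.mono η hrq.le) (φ r b))) b
  · have h2 : G.map (T.mono η (hpr.le.trans hrq.le)) (φ p a) =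
        G.map (T.mono η hrq.le) (G.map (T.mono η hpr.le) (φ p a)) := by
      rw [G.map_comp]
    rw [h2, hy]
    refine le_trans (mergeDist_map_le T G (T.mono η hrq.le) _ _) ?_
    exact le_iSup (fun a => mergeDist T G (T.T η r)
      (φ r (F.map hpr.le a)) (G.map (T.mono η hpr.le) (φ p a))) a
end
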